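/- Let ⟨A | R⟩ satisfy C(4) and let w ∈ A* have a relation prefix. If a piece p is a possible prefix of w (that is, some w' ≡ w has prefix p) but p is not a prefix of w, then the shortest relation prefix t X Y of w has |t| < |p|. -/

import Mathlib

variable {A : Type*}

/-- One step of rewriting with respect to a relation set `R`. -/
def OneStep (R : Set (List A × List A)) (u v : List A) : Prop :=
  ∃ x y p q, ((p, q) ∈ R ∨ (q, p) ∈ R) ∧ u = x ++ p ++ y ∧ v = x ++ q ++ y

/-- A (two-sided) congruence on the free monoid `A*`. -/
def IsCong (s : List A → List A → Prop) : Prop :=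
  Equivalence s ∧ ∀ u v x y : List A, s u v → s (x ++ u ++ y) (x ++ v ++ y)

/-- The least congruence on `A*` containing `R`; `Cong R u v` means `(u, v) ∈ R#`. -/
def Cong (R : Set (List A × List A)) (u v : List A) : Prop :=
  ∀ s, IsCong s → (∀ p ∈ R, s p.1 p.2) → s u v

/-- The relation words of the presentation `⟨A | R⟩`. -/
def RelWords (R : Set (List A × List A)) : Set (List A) :=
  {w | ∃ v, (w, v) ∈ R ∨ (v, w) ∈ R}

/-- `p` is a piece of the presentation `⟨A | R⟩`. -/
def IsPiece (R : Set (List A × List A)) (p : List A) : Prop :=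
  p = [] ∨
    (∃ u v, u ∈ RelWords R ∧ v ∈ RelWords R ∧ u ≠ v ∧ p <:+: u ∧ p <:+: v) ∨
    (∃ u x x' y y', u ∈ RelWords R ∧ u = x ++ p ++ y ∧ u = x' ++ p ++ y' ∧ x ≠ x')

/-- The presentation satisfies `C(n)`: no relation word is a product of fewer than `n` pieces. -/
def SatisfiesC (R : Set (List A × List A)) (n : ℕ) : Prop :=
  ∀ u ∈ RelWords R, ∀ l : List (List A), (∀ p ∈ l, IsPiece R p) → u = l.flatten →
    n ≤ l.length

/-- `X` is the maximal piece prefix of `u`. -/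
def MaxPiecePrefix (R : Set (List A × List A)) (u X : List A) : Prop :=
  X <+: u ∧ IsPiece R X ∧ ∀ p, p <+: u → IsPiece R p → p.length ≤ X.length

/-- `Z` is the maximal piece suffix of `u`. -/
def MaxPieceSuffix (R : Set (List A × List A)) (u Z : List A) : Prop :=
  Z <:+ u ∧ IsPiece R Z ∧ ∀ p, p <:+ u → IsPiece R p → p.length ≤ Z.length

/-- `u = X ++ Y ++ Z` is the decomposition of the relation word `u` into its maximal
piece prefix `X`, middle word `Y`, and maximal piece suffix `Z`. -/
def RelDecomp (R : Set (List A × List A)) (u X Y Z : List A) : Prop :=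
  u ∈ RelWords R ∧ MaxPiecePrefix R u X ∧ MaxPieceSuffix R u Z ∧ u = X ++ Y ++ Z

/-- `Y` is the middle word of the relation word `u`. -/
def MiddleWord (R : Set (List A × List A)) (u Y : List A) : Prop :=
  ∃ X Z, RelDecomp R u X Y Z

/-- `v` is a complement of the relation word `u`. -/
def ComplRel (R : Set (List A × List A)) (u v : List A) : Prop :=
  Relation.ReflTransGen (fun a b => (a, b) ∈ R ∨ (b, a) ∈ R) u v

/-- `a ++ X ++ Y` is a relation prefix of `w`. -/
def IsRelPrefix (R : Set (List A × List A)) (w a X Y : List A) : Prop :=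
  (∃ u Z, RelDecomp R u X Y Z) ∧ (a ++ X ++ Y) <+: w

section Aux

variable {R : Set (List A × List A)}

/-! ### Generic list lemmas -/

lemma isInfix_of_prefix_drop {s u : List A} {o : ℕ} (h : s <+: u.drop o) : s <:+: u := by
  obtain ⟨r, hr⟩ := h
  exact ⟨u.take o, r, by rw [List.append_assoc, hr, List.take_append_drop]⟩

lemma prefix_of_prefix_le {l a b : List A} (ha : a <+: l) (hb : b <+: l)
    (h : a.length ≤ b.length) : a <+: b := by
  rcases List.prefix_or_prefix_of_prefix ha hb with h' | h'
  · exact h'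
  · have := h'.eq_of_length_le h
    cases this
    exact List.prefix_rfl

lemma IsPrefix.drop' {s t : List A} (h : s <+: t) (k : ℕ) : s.drop k <+: t.drop k := by
  obtain ⟨r, rfl⟩ := h
  rw [List.drop_append]
  exact List.prefix_append _ _

lemma occAt_drop {v s : List A} {m : ℕ} (h : s <+: v.drop m) (k : ℕ) :
    s.drop k <+: v.drop (m + k) := by
  have := IsPrefix.drop' h k
  rwa [List.drop_drop] at this

lemma window_prefix {v s s' : List A} {m m' : ℕ} (hs : s <+: v.drop m) (hs' : s' <+: v.drop m')
    (h1 : m ≤ m') (h2 : m' + s'.length ≤ m + s.length) : s' <+: s.drop (m' - m) := by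
  have hd : s.drop (m' - m) <+: v.drop m' := by
    have := occAt_drop hs (m' - m)
    rwa [show m + (m' - m) = m' from by omega] at this
  exact prefix_of_prefix_le hs' hd (by rw [List.length_drop]; omega)

lemma occAt_frozen {v v' s : List A} {m M : ℕ} (hM : v.take M = v'.take M)
    (hm : m + s.length ≤ M) (hs : s <+: v.drop m) : s <+: v'.drop m := by
  have key : ∀ w : List A, (w.take (m + s.length)).drop m = (w.drop m).take s.length := by
    intro w
    rw [List.drop_take]
    congr 1
    omega
  have e2 : v.take (m + s.length) = v'.take (m + s.length) := by
    have := congrArg (List.take (m + s.length)) hM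
    simpa [List.take_take, Nat.min_eq_left hm] using this
  have e : (v'.drop m).take s.length = s := by
    rw [← key, ← e2, key]
    exact (List.prefix_iff_eq_take.mp hs).symm
  exact List.prefix_iff_eq_take.mpr e.symm

/-! ### Piece lemmas -/

lemma piece_of_two_occ {u₁ u₂ s : List A} {o₁ o₂ : ℕ}
    (h₁ : u₁ ∈ RelWords R) (h₂ : u₂ ∈ RelWords R)
    (hs₁ : s <+: u₁.drop o₁) (hs₂ : s <+: u₂.drop o₂)
    (hne : u₁ ≠ u₂ ∨ o₁ ≠ o₂) : IsPiece R s := by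
  rcases eq_or_ne s [] with rfl | hsne
  · exact Or.inl rfl
  rcases hne with hne | hne
  · exact Or.inr (Or.inl ⟨u₁, u₂, h₁, h₂, hne, isInfix_of_prefix_drop hs₁,
      isInfix_of_prefix_drop hs₂⟩)
  rcases eq_or_ne u₁ u₂ with heq | hne'
  · subst heq
    obtain ⟨r₁, hr₁⟩ := hs₁
    obtain ⟨r₂, hr₂⟩ := hs₂
    have hlen₁ : o₁ < u₁.length := by
      by_contra hcon
      push_neg at hcon
      rw [List.drop_eq_nil_of_le hcon] at hr₁
      exact hsne (List.append_eq_nil_iff.mp hr₁).1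
    have hlen₂ : o₂ < u₁.length := by
      by_contra hcon
      push_neg at hcon
      rw [List.drop_eq_nil_of_le hcon] at hr₂
      exact hsne (List.append_eq_nil_iff.mp hr₂).1
    refine Or.inr (Or.inr ⟨u₁, u₁.take o₁, u₁.take o₂, r₁, r₂, h₁, ?_, ?_, ?_⟩)
    · rw [List.append_assoc, hr₁, List.take_append_drop]
    · rw [List.append_assoc, hr₂, List.take_append_drop]
    · intro hcon
      have := congrArg List.length hcon
      rw [List.length_take, List.length_take] at this
      omega
  · exact Or.inr (Or.inl ⟨u₁, u₂, h₁, h₂, hne', isInfix_of_prefix_drop hs₁,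
      isInfix_of_prefix_drop hs₂⟩)

lemma IsPiece.of_infix {p s : List A} (hp : IsPiece R p) (hs : s <:+: p) : IsPiece R s := by
  rcases hp with rfl | ⟨u, v, hu, hv, huv, h1, h2⟩ | ⟨u, x, x', y, y', hu, e1, e2, hxx⟩
  · rw [List.infix_nil.mp hs]
    exact Or.inl rfl
  · exact Or.inr (Or.inl ⟨u, v, hu, hv, huv, hs.trans h1, hs.trans h2⟩)
  · obtain ⟨a, b, hab⟩ := hs
    refine Or.inr (Or.inr ⟨u, x ++ a, x' ++ a, b ++ y, b ++ y', hu, ?_, ?_, ?_⟩)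
    · rw [e1, ← hab]; simp [List.append_assoc]
    · rw [e2, ← hab]; simp [List.append_assoc]
    · intro hcon
      exact hxx (List.append_cancel_right hcon)

/-! ### C(4) consequences -/

lemma relWord_not_piece (hC : SatisfiesC R 4) {u : List A} (hu : u ∈ RelWords R)
    (h : IsPiece R u) : False := by
  have := hC u hu [u] (by simpa using h) (by simp)
  simp at this

lemma not_two_pieces (hC : SatisfiesC R 4) {u s₁ s₂ : List A} (hu : u ∈ RelWords R)
    (he : u = s₁ ++ s₂) (h₁ : IsPiece R s₁) (h₂ : IsPiece R s₂) : False := by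
  have := hC u hu [s₁, s₂] (by
    intro q hq
    simp at hq
    rcases hq with rfl | rfl <;> assumption) (by simp [he])
  simp at this

/-! ### Decomposition lemmas -/

lemma RelDecomp.length_eq {w X Y Z : List A} (hd : RelDecomp R w X Y Z) :
    w.length = X.length + Y.length + Z.length := by
  rw [hd.2.2.2]; simp; omega

lemma RelDecomp.middle_ne_nil (hC : SatisfiesC R 4) {w X Y Z : List A}
    (hd : RelDecomp R w X Y Z) : Y ≠ [] := by
  intro h
  refine not_two_pieces hC hd.1 ?_ hd.2.1.2.1 hd.2.2.1.2.1
  rw [hd.2.2.2, h]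
  simp

lemma RelDecomp.piece_suffix_le {w X Y Z s : List A} (hd : RelDecomp R w X Y Z)
    (hs : s <:+ w) (hp : IsPiece R s) : s.length ≤ Z.length :=
  hd.2.2.1.2.2 s hs hp

lemma RelDecomp.XY_prefix {w X Y Z : List A} (hd : RelDecomp R w X Y Z) :
    X ++ Y <+: w := by
  rw [hd.2.2.2]
  exact List.prefix_append _ _

lemma RelDecomp.XY_prefix_take {w X Y Z : List A} (hd : RelDecomp R w X Y Z) {ℓ : ℕ}
    (h : X.length + Y.length ≤ ℓ) : X ++ Y <+: w.take ℓ := by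
  have e : w.take (X.length + Y.length) = X ++ Y := by
    rw [hd.2.2.2]
    exact List.take_left' (by simp)
  have : w.take (X.length + Y.length) = (w.take ℓ).take (X.length + Y.length) := by
    rw [List.take_take, Nat.min_eq_left h]
  rw [← e, this]
  exact List.take_prefix _ _

lemma exists_relDecomp (hC : SatisfiesC R 4) {u : List A} (hu : u ∈ RelWords R) :
    ∃ X Y Z, RelDecomp R u X Y Z := by
  classical
  set SP : Set ℕ := {k | k ≤ u.length ∧ IsPiece R (u.take k)} with hSP
  have hne : SP.Nonempty := ⟨0, by simp [hSP], Or.inl (by simp)⟩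
  have hbdd : BddAbove SP := ⟨u.length, fun k hk => hk.1⟩
  have hK : sSup SP ∈ SP := Nat.sSup_mem hne hbdd
  set K := sSup SP with hKdef
  set SZ : Set ℕ := {k | k ≤ u.length ∧ IsPiece R (u.drop (u.length - k))} with hSZ
  have hzne : SZ.Nonempty := ⟨0, by simp [hSZ], Or.inl (by simp)⟩
  have hzbdd : BddAbove SZ := ⟨u.length, fun k hk => hk.1⟩
  have hM : sSup SZ ∈ SZ := Nat.sSup_mem hzne hzbdd
  set M := sSup SZ with hMdef
  have hover : K + M ≤ u.length := by
    by_contra hov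
    push_neg at hov
    refine not_two_pieces hC hu (List.take_append_drop K u).symm hK.2 ?_
    have h1 : u.drop K = (u.drop (u.length - M)).drop (K - (u.length - M)) := by
      rw [List.drop_drop]
      congr 1
      omega
    rw [h1]
    exact hM.2.of_infix (List.drop_suffix _ _).isInfix
  refine ⟨u.take K, (u.take (u.length - M)).drop K, u.drop (u.length - M), hu,
    ⟨List.take_prefix _ _, hK.2, ?_⟩, ⟨List.drop_suffix _ _, hM.2, ?_⟩, ?_⟩
  · intro q hq hqp
    have hqmem : q.length ∈ SP := ⟨hq.length_le, by
      rw [← List.prefix_iff_eq_take.mp hq]; exact hqp⟩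
    have := le_csSup hbdd hqmem
    rw [List.length_take]
    omega
  · intro q hq hqp
    have hqmem : q.length ∈ SZ := ⟨hq.length_le, by
      rw [← List.suffix_iff_eq_drop.mp hq]; exact hqp⟩
    have := le_csSup hzbdd hqmem
    rw [List.length_drop]
    omega
  · have e1 : u.take K ++ (u.take (u.length - M)).drop K = u.take (u.length - M) := by
      have : u.take K = (u.take (u.length - M)).take K := by
        rw [List.take_take, Nat.min_eq_left (by omega)]
      rw [this, List.take_append_drop]
    rw [e1, List.take_append_drop]

/-! ### The stack invariant -/

inductive GS (R : Set (List A × List A)) (v : List A) : ℕ → Prop where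
  | full (m : ℕ) (w X Y Z : List A) (hd : RelDecomp R w X Y Z) (h : w <+: v.drop m) : GS R v m
  | step (m ℓ : ℕ) (w X Y Z : List A) (hd : RelDecomp R w X Y Z)
      (h1 : X.length + Y.length ≤ ℓ) (h2 : ℓ ≤ w.length)
      (h : w.take ℓ <+: v.drop m) (next : GS R v (m + ℓ)) : GS R v m

lemma GS.head {v : List A} {m : ℕ} (h : GS R v m) :
    ∃ w X Y Z ℓ, RelDecomp R w X Y Z ∧ X.length + Y.length ≤ ℓ ∧ ℓ ≤ w.length ∧
      w.take ℓ <+: v.drop m := by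
  cases h with
  | full m w X Y Z hd h =>
      exact ⟨w, X, Y, Z, w.length, hd, by have := hd.length_eq; omega, le_rfl,
        by simpa using h⟩
  | step m ℓ w X Y Z hd h1 h2 h next => exact ⟨w, X, Y, Z, ℓ, hd, h1, h2, h⟩

lemma gs_block (hC : SatisfiesC R 4) {v q : List A} {n k : ℕ}
    (hq : q ∈ RelWords R) (hnext : GS R v n) (hrest : q.drop k <+: v.drop n)
    (hk1 : 1 ≤ k) (hk2 : k < q.length) (hpre : IsPiece R (q.take k)) : False := by
  obtain ⟨w₂, X₂, Y₂, Z₂, ℓ₂, hd₂, h1₂, h2₂, h₂⟩ := hnext.head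
  rcases le_or_gt (q.length - k) ℓ₂ with hle | hlt
  · have hr : q.drop k <+: w₂.take ℓ₂ := by
      refine prefix_of_prefix_le hrest h₂ ?_
      rw [List.length_drop, List.length_take]
      omega
    have hpc : IsPiece R (q.drop k) := by
      refine piece_of_two_occ (o₁ := 0) (o₂ := k) hd₂.1 hq ?_ ?_ (Or.inr (by omega))
      · simpa using hr.trans (List.take_prefix _ _)
      · simp
    exact not_two_pieces hC hq (List.take_append_drop k q).symm hpre hpc
  · have hw : w₂.take ℓ₂ <+: q.drop k := by
      refine prefix_of_prefix_le h₂ hrest ?_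
      rw [List.length_drop, List.length_take]
      omega
    have hocc : (X₂ ++ Y₂) <+: q.drop k := (hd₂.XY_prefix_take h1₂).trans hw
    have hpc : IsPiece R (X₂ ++ Y₂) := by
      refine piece_of_two_occ (o₁ := 0) (o₂ := k) hd₂.1 hq ?_ hocc (Or.inr (by omega))
      · simpa using hd₂.XY_prefix
    exact not_two_pieces hC hd₂.1 hd₂.2.2.2 hpc hd₂.2.2.1.2.1


lemma gs_onestep (hC : SatisfiesC R 4) {x q q' y : List A}
    (hq : q ∈ RelWords R) (hq' : q' ∈ RelWords R) {j : ℕ}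
    (hGS : GS R (x ++ (q ++ y)) j) (hj : j ≤ x.length) :
    GS R (x ++ (q' ++ y)) j := by
  have hvd : (x ++ (q ++ y)).drop x.length = q ++ y := List.drop_left
  have hvd' : (x ++ (q' ++ y)).drop x.length = q' ++ y := List.drop_left
  have hM : (x ++ (q ++ y)).take x.length = (x ++ (q' ++ y)).take x.length := by
    rw [List.take_left, List.take_left]
  revert hj
  induction hGS with
  | full m w X Y Z hd h =>
      intro hj
      rcases le_or_gt (m + w.length) x.length with hc1 | hc2
      · exact GS.full m w X Y Z hd (occAt_frozen hM hc1 h)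
      · have hqocc : q <+: (x ++ (q ++ y)).drop x.length := by
          rw [hvd]; exact List.prefix_append _ _
        rcases eq_or_lt_of_le hj with heq | hmlt
        · -- m = x.length : lead position
          rcases eq_or_ne q w with rfl | hne
          · obtain ⟨X', Y', Z', hd'⟩ := exists_relDecomp hC hq'
            refine GS.full m q' X' Y' Z' hd' ?_
            rw [heq, hvd']; exact List.prefix_append _ _
          · rcases le_or_gt q.length w.length with hql | hql
            · have hpw : q <+: w := prefix_of_prefix_le (heq ▸ hqocc) h hql
              have : IsPiece R q := piece_of_two_occ (o₁ := 0) (o₂ := 0) hd.1 hq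
                (by simpa using hpw) (by simp) (Or.inl (Ne.symm hne))
              exact (relWord_not_piece hC hq this).elim
            · have hpw : w <+: q := prefix_of_prefix_le h (heq ▸ hqocc) hql.le
              have : IsPiece R w := piece_of_two_occ (o₁ := 0) (o₂ := 0) hq hd.1
                (by simpa using hpw) (by simp) (Or.inl hne)
              exact (relWord_not_piece hC hd.1 this).elim
        · -- m < x.length < m + |w|
          rcases le_or_gt (x.length + q.length) (m + w.length) with hin | hout
          · have hq_in : q <+: w.drop (x.length - m) := window_prefix h hqocc hmlt.le hin
            have : IsPiece R q := piece_of_two_occ (o₁ := x.length - m) (o₂ := 0) hd.1 hq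
              hq_in (by simp) (Or.inr (by omega))
            exact (relWord_not_piece hC hq this).elim
          · -- push
            have hd1occ : w.drop (x.length - m) <+: (x ++ (q ++ y)).drop x.length := by
              have := occAt_drop h (x.length - m)
              rwa [show m + (x.length - m) = x.length from by omega] at this
            have hd1q : w.drop (x.length - m) <+: q := by
              refine prefix_of_prefix_le hd1occ hqocc ?_
              rw [List.length_drop]; omega
            have hd1piece : IsPiece R (w.drop (x.length - m)) :=
              piece_of_two_occ (o₁ := x.length - m) (o₂ := 0) hd.1 hq
                List.prefix_rfl (by simpa using hd1q) (Or.inr (by omega))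
            have hlenZ : w.length - (x.length - m) ≤ Z.length := by
              have := hd.piece_suffix_le (List.drop_suffix (x.length - m) w) hd1piece
              rwa [List.length_drop] at this
            have hwlen := hd.length_eq
            refine GS.step m (x.length - m) w X Y Z hd (by omega) (by omega) ?_ ?_
            · refine occAt_frozen hM ?_ ((List.take_prefix _ _).trans h)
              rw [List.length_take]; omega
            · obtain ⟨X', Y', Z', hd'⟩ := exists_relDecomp hC hq'
              have hfull : GS R (x ++ (q' ++ y)) x.length :=
                GS.full x.length q' X' Y' Z' hd' (by rw [hvd']; exact List.prefix_append _ _)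
              rwa [show m + (x.length - m) = x.length from by omega]
  | step m ℓ w X Y Z hd h1 h2 h next ih =>
      intro hj
      have hY : Y ≠ [] := hd.middle_ne_nil hC
      have hYlen : 1 ≤ Y.length := List.length_pos_iff.mpr hY
      rcases le_or_gt (m + ℓ) x.length with hc1 | hc2
      · refine GS.step m ℓ w X Y Z hd h1 h2 ?_ (ih hc1)
        refine occAt_frozen hM ?_ h
        rw [List.length_take]; omega
      · have hqocc : q <+: (x ++ (q ++ y)).drop x.length := by
          rw [hvd]; exact List.prefix_append _ _
        rcases eq_or_lt_of_le hj with heq | hmlt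
        · -- m = x.length
          rcases eq_or_ne q w with rfl | hne
          · obtain ⟨X', Y', Z', hd'⟩ := exists_relDecomp hC hq'
            refine GS.full m q' X' Y' Z' hd' ?_
            rw [heq, hvd']; exact List.prefix_append _ _
          · rcases le_or_gt q.length ℓ with hql | hql
            · have hpw : q <+: w.take ℓ := by
                refine prefix_of_prefix_le (heq ▸ hqocc) h ?_
                rw [List.length_take]; omega
              have : IsPiece R q := piece_of_two_occ (o₁ := 0) (o₂ := 0) hd.1 hq
                (by simpa using hpw.trans (List.take_prefix _ _)) (by simp)
                (Or.inl (Ne.symm hne))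
              exact (relWord_not_piece hC hq this).elim
            · have he₁ : w.take ℓ <+: q := by
                refine prefix_of_prefix_le h (heq ▸ hqocc) ?_
                rw [List.length_take]; omega
              have he₁eq : q.take ℓ = w.take ℓ := by
                have e := List.prefix_iff_eq_take.mp he₁
                rw [e, List.length_take]
                congr 1
                omega
              have hpre : IsPiece R (q.take ℓ) := by
                rw [he₁eq]
                exact piece_of_two_occ (o₁ := 0) (o₂ := 0) hd.1 hq
                  (by simpa using (List.take_prefix ℓ w)) (by simpa using he₁)
                  (Or.inl (Ne.symm hne))
              have hrest : q.drop ℓ <+: (x ++ (q ++ y)).drop (m + ℓ) := by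
                exact occAt_drop (heq ▸ hqocc) ℓ
              exact (gs_block hC hq next hrest (by omega) hql hpre).elim
        · -- m < x.length < m + ℓ : always contradiction
          have hd1occ : (w.take ℓ).drop (x.length - m) <+: (x ++ (q ++ y)).drop x.length := by
            have := occAt_drop h (x.length - m)
            rwa [show m + (x.length - m) = x.length from by omega] at this
          rcases le_or_gt (x.length + q.length) (m + ℓ) with hin | hout
          · have hq_in : q <+: (w.take ℓ).drop (x.length - m) := by
              refine window_prefix h hqocc hmlt.le ?_
              rw [List.length_take]; omega
            have hq_in' : q <+: w.drop (x.length - m) := by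
              refine hq_in.trans ?_
              rw [List.drop_take]
              exact List.take_prefix _ _
            have : IsPiece R q := piece_of_two_occ (o₁ := x.length - m) (o₂ := 0) hd.1 hq
              hq_in' (by simp) (Or.inr (by omega))
            exact (relWord_not_piece hC hq this).elim
          · have hd1q : (w.take ℓ).drop (x.length - m) <+: q := by
              refine prefix_of_prefix_le hd1occ hqocc ?_
              rw [List.length_drop, List.length_take]; omega
            have he₁eq : q.take (ℓ - (x.length - m)) = (w.take ℓ).drop (x.length - m) := by
              have e := List.prefix_iff_eq_take.mp hd1q
              rw [e, List.length_drop, List.length_take]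
              congr 1
              omega
            have hpre : IsPiece R (q.take (ℓ - (x.length - m))) := by
              rw [he₁eq]
              refine piece_of_two_occ (o₁ := x.length - m) (o₂ := 0) hd.1 hq ?_
                (by simpa using hd1q) (Or.inr (by omega))
              rw [List.drop_take]
              exact List.take_prefix _ _
            have hrest : q.drop (ℓ - (x.length - m)) <+: (x ++ (q ++ y)).drop (m + ℓ) := by
              have := occAt_drop hqocc (ℓ - (x.length - m))
              rwa [show x.length + (ℓ - (x.length - m)) = m + ℓ from by omega] at this
            exact (gs_block hC hq next hrest (by omega) (by omega) hpre).elim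

/-! ### Propagation along rewriting chains -/

def Good (R : Set (List A × List A)) (p v : List A) : Prop :=
  p <+: v ∨ ∃ j, j < p.length ∧ GS R v j

lemma good_onestep (hC : SatisfiesC R 4) {p a b : List A}
    (h : OneStep R a b) (hg : Good R p a) : Good R p b := by
  obtain ⟨x, y, qa, qb, hR, rfl, rfl⟩ := h
  have hqa : qa ∈ RelWords R := ⟨qb, hR⟩
  have hqb : qb ∈ RelWords R := ⟨qa, hR.symm⟩
  rw [List.append_assoc] at hg ⊢
  rcases hg with hp | ⟨j, hj, hGS⟩
  · rcases le_or_gt p.length x.length with hle | hlt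
    · left
      have hpx : p <+: x := prefix_of_prefix_le hp (List.prefix_append _ _) hle
      exact hpx.trans (List.prefix_append _ _)
    · right
      obtain ⟨X', Y', Z', hd'⟩ := exists_relDecomp hC hqb
      exact ⟨x.length, hlt, GS.full x.length qb X' Y' Z' hd'
        (by rw [List.drop_left]; exact List.prefix_append _ _)⟩
  · rcases le_or_gt j x.length with hle | hlt
    · exact Or.inr ⟨j, hj, gs_onestep hC hqa hqb hGS hle⟩
    · right
      obtain ⟨X', Y', Z', hd'⟩ := exists_relDecomp hC hqb
      exact ⟨x.length, by omega, GS.full x.length qb X' Y' Z' hd'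
        (by rw [List.drop_left]; exact List.prefix_append _ _)⟩

lemma onestep_symm {a b : List A} (h : OneStep R a b) : OneStep R b a := by
  obtain ⟨x, y, pp, qq, hR, ha, hb⟩ := h
  exact ⟨x, y, qq, pp, hR.symm, hb, ha⟩

lemma onestep_lift {a b : List A} (xx yy : List A) (h : OneStep R a b) :
    OneStep R (xx ++ a ++ yy) (xx ++ b ++ yy) := by
  obtain ⟨x, y, pp, qq, hR, rfl, rfl⟩ := h
  exact ⟨xx ++ x, y ++ yy, pp, qq, hR, by simp [List.append_assoc], by simp [List.append_assoc]⟩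

lemma rtg_onestep_symm {a b : List A}
    (h : Relation.ReflTransGen (OneStep R) a b) :
    Relation.ReflTransGen (OneStep R) b a := by
  induction h with
  | refl => exact Relation.ReflTransGen.refl
  | tail hs hstep ih =>
      exact Relation.ReflTransGen.trans
        (Relation.ReflTransGen.single (onestep_symm hstep)) ih

lemma cong_chain {w w' : List A} (h : Cong R w w') :
    Relation.ReflTransGen (OneStep R) w w' := by
  refine h (Relation.ReflTransGen (OneStep R)) ⟨⟨fun _ => Relation.ReflTransGen.refl,
    fun hab => rtg_onestep_symm hab, fun hab hbc => hab.trans hbc⟩, ?_⟩ ?_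
  · intro u v xx yy huv
    induction huv with
    | refl => exact Relation.ReflTransGen.refl
    | tail hs hstep ih => exact ih.tail (onestep_lift xx yy hstep)
  · intro pr hpr
    exact Relation.ReflTransGen.single ⟨[], [], pr.1, pr.2, Or.inl hpr, by simp, by simp⟩

lemma good_chain (hC : SatisfiesC R 4) {p a b : List A}
    (h : Relation.ReflTransGen (OneStep R) a b) (hg : Good R p a) : Good R p b := by
  induction h with
  | refl => exact hg
  | tail hs hstep ih => exact good_onestep hC hstep ih

end Aux

/-- if a piece `p` is a possible but not actual prefix of `w`, then the
shortest relation prefix `t X Y` of `w` has `|t| < |p|`. -/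
theorem shortest_relation_prefix_lt (R : Set (List A × List A)) (hC : SatisfiesC R 4)
    (p w t X Y : List A) (hp : IsPiece R p)
    (hpos : ∃ w', Cong R w w' ∧ p <+: w')
    (hnot : ¬ p <+: w)
    (hrel : IsRelPrefix R w t X Y)
    (hshort : ∀ t' X' Y', IsRelPrefix R w t' X' Y' →
      (t ++ X ++ Y).length ≤ (t' ++ X' ++ Y').length) :
    t.length < p.length := by
  by_contra hcon
  push_neg at hcon
  obtain ⟨w', hcong, hpw'⟩ := hpos
  have hchain := rtg_onestep_symm (cong_chain hcong)
  have hgood : Good R p w := good_chain hC hchain (Or.inl hpw')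
  rcases hgood with hpw | ⟨j, hj, hGS⟩
  · exact hnot hpw
  obtain ⟨wh, Xh, Yh, Zh, ℓ, hd, h1, h2, hocc⟩ := hGS.head
  have hoccXY : (Xh ++ Yh) <+: w.drop j := (hd.XY_prefix_take h1).trans hocc
  -- the relation prefix of `w` at position `j`
  have hrp : IsRelPrefix R w (w.take j) Xh Yh := by
    refine ⟨⟨wh, Zh, hd⟩, ?_⟩
    obtain ⟨r, hr⟩ := hoccXY
    refine ⟨r, ?_⟩
    rw [List.append_assoc, List.append_assoc, ← List.append_assoc Xh, hr,
      List.take_append_drop]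
  have hlen := hshort _ _ _ hrp
  -- basic lengths
  have htw : t.length + (X ++ Y).length ≤ w.length := by
    have := hrel.2.length_le
    simpa [List.length_append] using this
  have hj_t : j < t.length := lt_of_lt_of_le hj hcon
  have hjw : j ≤ w.length := by omega
  have hlen' : t.length + (X ++ Y).length ≤ j + (Xh ++ Yh).length := by
    have e : (w.take j).length = j := by rw [List.length_take]; omega
    simp only [List.length_append] at hlen ⊢
    rw [e] at hlen
    omega
  -- occurrence of X ++ Y at position |t| in w
  obtain ⟨u, Z, hdu⟩ := hrel.1
  have hXYw : (X ++ Y) <+: w.drop t.length := by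
    obtain ⟨r, hr⟩ := hrel.2
    refine ⟨r, ?_⟩
    rw [← List.drop_left (l₁ := t) (l₂ := X ++ Y ++ r), ← List.append_assoc, ← List.append_assoc, hr]
  have hwin : (X ++ Y) <+: (Xh ++ Yh).drop (t.length - j) :=
    window_prefix hoccXY hXYw hj_t.le (by omega)
  have hwhpre : (Xh ++ Yh) <+: wh := hd.XY_prefix
  have hXYwh : (X ++ Y) <+: wh.drop (t.length - j) := hwin.trans (IsPrefix.drop' hwhpre _)
  have hXYu : (X ++ Y) <+: u.drop 0 := by simpa using hdu.XY_prefix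
  have hpiece : IsPiece R (X ++ Y) :=
    piece_of_two_occ hd.1 hdu.1 hXYwh hXYu (Or.inr (by omega))
  exact not_two_pieces hC hdu.1 hdu.2.2.2 hpiece hdu.2.2.1.2.1
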